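/- There exists a constant c > 0, depending only on L and h, such that for all u of class C² on M̄, all φ of class C¹ on M̄, and all continuous ψ on M̄, one has | ∫_M w(u) (∂_z φ) ψ dM | ≤ c ‖u‖_{H¹}^{1/2} |u|_{H²}^{1/2} |∂_z φ| |ψ|, where w(u)(x,z) = ∫_z^0 ∂_x u(x,s) ds. -/

import Mathlib

open MeasureTheory Set intervalIntegral

/-- Partial derivative in the first (horizontal, `x`) variable. -/
noncomputable def pdx (f : ℝ × ℝ → ℝ) (p : ℝ × ℝ) : ℝ := fderiv ℝ f p (1, 0)

/-- Partial derivative in the second (vertical, `z`) variable. -/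
noncomputable def pdz (f : ℝ × ℝ → ℝ) (p : ℝ × ℝ) : ℝ := fderiv ℝ f p (0, 1)

/-- The diagnostic vertical velocity `w(u)(x,z) = ∫_z^0 ∂ₓ u(x,s) ds`. -/
noncomputable def wOp (u : ℝ × ℝ → ℝ) (p : ℝ × ℝ) : ℝ := ∫ s in p.2..0, pdx u (p.1, s)

/-- The open domain `M = (0,L) × (-h,0)`. -/
def dom (L h : ℝ) : Set (ℝ × ℝ) := Ioo 0 L ×ˢ Ioo (-h) 0

/-- The closed domain `M̄ = [0,L] × [-h,0]`. -/
def cdom (L h : ℝ) : Set (ℝ × ℝ) := Icc 0 L ×ˢ Icc (-h) 0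

/-- The `L²(M)` norm. -/
noncomputable def l2 (L h : ℝ) (f : ℝ × ℝ → ℝ) : ℝ :=
  Real.sqrt (∫ p in dom L h, f p ^ 2)

/-- The `H¹(M)` norm. -/
noncomputable def h1n (L h : ℝ) (f : ℝ × ℝ → ℝ) : ℝ :=
  Real.sqrt (l2 L h f ^ 2 + l2 L h (pdx f) ^ 2 + l2 L h (pdz f) ^ 2)

/-- The `H²(M)` norm. -/
noncomputable def h2n (L h : ℝ) (f : ℝ × ℝ → ℝ) : ℝ :=
  Real.sqrt (h1n L h f ^ 2 + l2 L h (pdx (pdx f)) ^ 2 + l2 L h (pdx (pdz f)) ^ 2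
    + l2 L h (pdz (pdz f)) ^ 2)

/-! Writing `g = ∂ₓu`, Cauchy–Schwarz in `z` gives `|w(u)(x,z)|² ≤ h ∫ g(x,·)²`.
The column mass `x ↦ ∫ g(x,·)²` exceeds its mean `|g|²/L` by at most
`∫∫ |∂ₓ(g²)| ≤ 2 |g| |∂ₓg|`, hence `|w(u)|² ≤ h (1/L + 2) ‖u‖_{H¹} |u|_{H²}` pointwise on `M̄`.
Cauchy–Schwarz for `∂_zφ · ψ` finishes. -/

section CauchySchwarz

variable {α : Type*} [MeasurableSpace α] {μ : Measure α}

theorem integral_abs_mul_le_sqrt_mul_sqrt {f g : α → ℝ} (hf : MemLp f 2 μ)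
    (hg : MemLp g 2 μ) :
    ∫ a, |f a * g a| ∂μ ≤ √(∫ a, f a ^ 2 ∂μ) * √(∫ a, g a ^ 2 ∂μ) := by
  have h := integral_mul_norm_le_Lp_mul_Lq (μ := μ) Real.HolderConjugate.two_two
    (by simpa using hf) (by simpa using hg)
  simpa only [Real.norm_eq_abs, ← abs_mul, Real.rpow_two, sq_abs, ← Real.sqrt_eq_rpow]
    using h

theorem abs_integral_mul_mul_le {F f g : α → ℝ} {W : ℝ} (hW : 0 ≤ W)
    (hF : ∀ᵐ a ∂μ, |F a| ≤ W) (hf : MemLp f 2 μ) (hg : MemLp g 2 μ) :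
    |∫ a, F a * f a * g a ∂μ| ≤ W * √(∫ a, f a ^ 2 ∂μ) * √(∫ a, g a ^ 2 ∂μ) := by
  have hfg : Integrable (fun a => |f a * g a|) μ := (hf.integrable_mul hg).abs
  calc |∫ a, F a * f a * g a ∂μ|
      ≤ ∫ a, |F a * f a * g a| ∂μ := abs_integral_le_integral_abs
    _ ≤ ∫ a, W * |f a * g a| ∂μ := by
      refine integral_mono_of_nonneg (.of_forall fun a => abs_nonneg _) (hfg.const_mul W) ?_
      filter_upwards [hF] with a ha
      rw [mul_assoc, abs_mul]
      exact mul_le_mul_of_nonneg_right ha (abs_nonneg _)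
    _ = W * ∫ a, |f a * g a| ∂μ := integral_const_mul W _
    _ ≤ W * √(∫ a, f a ^ 2 ∂μ) * √(∫ a, g a ^ 2 ∂μ) := by
      rw [mul_assoc]
      exact mul_le_mul_of_nonneg_left (integral_abs_mul_le_sqrt_mul_sqrt hf hg) hW

end CauchySchwarz

theorem intervalIntegral_abs_le_sqrt_mul_sqrt {f : ℝ → ℝ} {a b : ℝ} (hab : a ≤ b)
    (hf : Continuous f) :
    ∫ t in a..b, |f t| ≤ √(b - a) * √(∫ t in a..b, f t ^ 2) := by
  have hf2 : MemLp f 2 (volume.restrict (Ioc a b)) :=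
    (memLp_two_iff_integrable_sq hf.aestronglyMeasurable).2 (hf.pow 2).integrableOn_Ioc
  have h1 : MemLp (fun _ => (1 : ℝ)) 2 (volume.restrict (Ioc a b)) :=
    (memLp_two_iff_integrable_sq aestronglyMeasurable_const).2 (continuous_const.integrableOn_Ioc)
  have hlen : ∫ _ in Ioc a b, (1 : ℝ) ^ 2 = b - a := by simp [hab]
  have h := integral_abs_mul_le_sqrt_mul_sqrt h1 hf2
  simp only [one_mul, hlen] at h
  simpa only [intervalIntegral.integral_of_le hab] using h

theorem sub_le_intervalIntegral_abs_deriv {F F' : ℝ → ℝ} {a b x y : ℝ} (hx : x ∈ Icc a b)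
    (hy : y ∈ Icc a b) (hF : ∀ t, HasDerivAt F (F' t) t) (hF' : Continuous F') :
    F x - F y ≤ ∫ t in a..b, |F' t| := by
  have hab : a ≤ b := hx.1.trans hx.2
  rw [← intervalIntegral.integral_eq_sub_of_hasDerivAt (fun t _ => hF t)
    (hF'.intervalIntegrable _ _)]
  calc (∫ t in y..x, F' t) ≤ |∫ t in y..x, F' t| := le_abs_self _
    _ ≤ |(∫ t in y..x, |F' t|)| := by
      simpa only [Real.norm_eq_abs] using
        intervalIntegral.norm_integral_le_abs_integral_norm (f := F') (μ := volume)
    _ ≤ |(∫ t in a..b, |F' t|)| := by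
      refine intervalIntegral.abs_integral_mono_interval ?_ (.of_forall fun t => abs_nonneg _)
        (hF'.abs.intervalIntegrable _ _)
      rw [uIoc_of_le hab]
      exact Ioc_subset_Ioc (le_min hy.1 hx.1) (max_le hy.2 hx.2)
    _ = ∫ t in a..b, |F' t| :=
      abs_of_nonneg (intervalIntegral.integral_nonneg hab fun t _ => abs_nonneg _)

theorem contDiff_pdx {f : ℝ × ℝ → ℝ} {m n : WithTop ℕ∞} (hf : ContDiff ℝ n f)
    (hmn : m + 1 ≤ n) : ContDiff ℝ m (pdx f) :=
  (hf.fderiv_right hmn).clm_apply contDiff_const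

theorem continuous_pdx {f : ℝ × ℝ → ℝ} (hf : ContDiff ℝ 1 f) : Continuous (pdx f) :=
  (hf.continuous_fderiv one_ne_zero).clm_apply continuous_const

theorem continuous_pdz {f : ℝ × ℝ → ℝ} (hf : ContDiff ℝ 1 f) : Continuous (pdz f) :=
  (hf.continuous_fderiv one_ne_zero).clm_apply continuous_const

theorem hasDerivAt_pdx {f : ℝ × ℝ → ℝ} {t z : ℝ} (hf : DifferentiableAt ℝ f (t, z)) :
    HasDerivAt (fun s => f (s, z)) (pdx f (t, z)) t :=
  hf.hasFDerivAt.comp_hasDerivAt t ((hasDerivAt_id t).prodMk (hasDerivAt_const t z))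

section Rectangle

variable {L h : ℝ}

theorem dom_subset_cdom : dom L h ⊆ cdom L h :=
  prod_mono Ioo_subset_Icc_self Ioo_subset_Icc_self

theorem integrableOn_dom {F : ℝ × ℝ → ℝ} (hF : Continuous F) : IntegrableOn F (dom L h) :=
  (hF.continuousOn.integrableOn_compact (isCompact_Icc.prod isCompact_Icc)).mono_set
    dom_subset_cdom

theorem memLp_two_dom {F : ℝ × ℝ → ℝ} (hF : Continuous F) :
    MemLp F 2 (volume.restrict (dom L h)) :=
  (memLp_two_iff_integrable_sq hF.aestronglyMeasurable).2 (integrableOn_dom (hF.pow 2))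

theorem l2_sq (f : ℝ × ℝ → ℝ) : l2 L h f ^ 2 = ∫ p in dom L h, f p ^ 2 :=
  Real.sq_sqrt (integral_nonneg fun _ => sq_nonneg _)

theorem integral_dom_eq_iteratedIntegral (hL : 0 ≤ L) (hh : 0 ≤ h) {F : ℝ × ℝ → ℝ}
    (hF : Continuous F) : ∫ p in dom L h, F p = ∫ x in 0..L, ∫ z in -h..0, F (x, z) := by
  have hF' : IntegrableOn F (Ioo 0 L ×ˢ Ioo (-h) 0) (volume.prod volume) := by
    rw [← Measure.volume_eq_prod]; exact integrableOn_dom hF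
  simp only [dom, Measure.volume_eq_prod, setIntegral_prod F hF',
    intervalIntegral.integral_of_le hL, intervalIntegral.integral_of_le (neg_nonpos.2 hh),
    integral_Ioc_eq_integral_Ioo]

theorem integral_dom_eq_iteratedIntegral_swap (hL : 0 ≤ L) (hh : 0 ≤ h) {F : ℝ × ℝ → ℝ}
    (hF : Continuous F) : ∫ p in dom L h, F p = ∫ z in -h..0, ∫ x in 0..L, F (x, z) := by
  rw [integral_dom_eq_iteratedIntegral hL hh hF]
  exact intervalIntegral_intervalIntegral_swap
    ((hF.continuousOn.integrableOn_compact (isCompact_uIcc.prod isCompact_uIcc)).mono_set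
      (prod_mono uIoc_subset_uIcc uIoc_subset_uIcc))

theorem l2_nonneg (f : ℝ × ℝ → ℝ) : 0 ≤ l2 L h f := Real.sqrt_nonneg _

theorem l2_pdx_le_h1n (f : ℝ × ℝ → ℝ) : l2 L h (pdx f) ≤ h1n L h f := by
  apply Real.le_sqrt_of_sq_le
  nlinarith [sq_nonneg (l2 L h f), sq_nonneg (l2 L h (pdz f))]

theorem h1n_le_h2n (f : ℝ × ℝ → ℝ) : h1n L h f ≤ h2n L h f := by
  apply Real.le_sqrt_of_sq_le
  nlinarith [sq_nonneg (l2 L h (pdx (pdx f))), sq_nonneg (l2 L h (pdx (pdz f))),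
    sq_nonneg (l2 L h (pdz (pdz f)))]

theorem l2_pdx_pdx_le_h2n (f : ℝ × ℝ → ℝ) : l2 L h (pdx (pdx f)) ≤ h2n L h f := by
  apply Real.le_sqrt_of_sq_le
  nlinarith [sq_nonneg (h1n L h f), sq_nonneg (l2 L h (pdx (pdz f))),
    sq_nonneg (l2 L h (pdz (pdz f)))]

theorem sq_sub_sq_le_intervalIntegral {g : ℝ × ℝ → ℝ} (hg : ContDiff ℝ 1 g) {a b x y : ℝ}
    (hx : x ∈ Icc a b) (hy : y ∈ Icc a b) (z : ℝ) :
    g (x, z) ^ 2 - g (y, z) ^ 2 ≤ ∫ t in a..b, |2 * g (t, z) * pdx g (t, z)| := by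
  refine sub_le_intervalIntegral_abs_deriv (F := fun t => g (t, z) ^ 2) hx hy (fun t => ?_) ?_
  · exact ((hasDerivAt_pow 2 _).comp t
      (hasDerivAt_pdx ((hg.differentiable one_ne_zero) (t, z)))).congr_deriv (by ring)
  · have hslice : Continuous fun t : ℝ => (t, z) := continuous_id.prodMk continuous_const
    exact (continuous_const.mul (hg.continuous.comp hslice)).mul
      ((continuous_pdx hg).comp hslice)

theorem intervalIntegral_sq_sub_le (hL : 0 ≤ L) (hh : 0 ≤ h) {g : ℝ × ℝ → ℝ}
    (hg : ContDiff ℝ 1 g) {x y : ℝ} (hx : x ∈ Icc 0 L) (hy : y ∈ Icc 0 L) :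
    (∫ z in -h..0, g (x, z) ^ 2) - ∫ z in -h..0, g (y, z) ^ 2 ≤
      ∫ p in dom L h, |2 * g p * pdx g p| := by
  have hc : Continuous fun p => |2 * g p * pdx g p| :=
    ((continuous_const.mul hg.continuous).mul (continuous_pdx hg)).abs
  have hslice : ∀ s, Continuous fun z => g (s, z) ^ 2 := fun s =>
    (hg.continuous.comp (continuous_const.prodMk continuous_id)).pow 2
  have hcol : Continuous fun z => ∫ t in 0..L, |2 * g (t, z) * pdx g (t, z)| :=
    intervalIntegral.continuous_parametric_intervalIntegral_of_continuous'
      (f := fun z t => |2 * g (t, z) * pdx g (t, z)|) (hc.comp continuous_swap) 0 L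
  rw [← intervalIntegral.integral_sub ((hslice x).intervalIntegrable _ _)
    ((hslice y).intervalIntegrable _ _), integral_dom_eq_iteratedIntegral_swap hL hh hc]
  exact intervalIntegral.integral_mono_on (neg_nonpos.2 hh)
    (((hslice x).sub (hslice y)).intervalIntegrable _ _) (hcol.intervalIntegrable _ _)
    fun z _ => sq_sub_sq_le_intervalIntegral hg hx hy z

theorem intervalIntegral_sq_le (hL : 0 < L) (hh : 0 ≤ h) {g : ℝ × ℝ → ℝ}
    (hg : ContDiff ℝ 1 g) {x : ℝ} (hx : x ∈ Icc 0 L) :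
    ∫ z in -h..0, g (x, z) ^ 2 ≤ l2 L h g ^ 2 / L + 2 * l2 L h g * l2 L h (pdx g) := by
  set G : ℝ → ℝ := fun y => ∫ z in -h..0, g (y, z) ^ 2
  set D := ∫ p in dom L h, |2 * g p * pdx g p|
  have hD : D ≤ 2 * l2 L h g * l2 L h (pdx g) := by
    have h2 : ∀ p, |2 * g p * pdx g p| = 2 * |g p * pdx g p| := fun p => by
      rw [mul_assoc, abs_mul, abs_two]
    calc D = 2 * ∫ p in dom L h, |g p * pdx g p| := by
          simp only [D, h2, MeasureTheory.integral_const_mul]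
      _ ≤ 2 * (l2 L h g * l2 L h (pdx g)) := mul_le_mul_of_nonneg_left
          (integral_abs_mul_le_sqrt_mul_sqrt (memLp_two_dom hg.continuous)
            (memLp_two_dom (continuous_pdx hg))) zero_le_two
      _ = 2 * l2 L h g * l2 L h (pdx g) := (mul_assoc _ _ _).symm
  have havg : L * (G x - D) ≤ l2 L h g ^ 2 := by
    have hA : l2 L h g ^ 2 = ∫ y in 0..L, G y :=
      (l2_sq g).trans (integral_dom_eq_iteratedIntegral hL.le hh (hg.continuous.pow 2))
    have hG : Continuous G :=
      intervalIntegral.continuous_parametric_intervalIntegral_of_continuous'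
        (f := fun y z => g (y, z) ^ 2) ((continuous_pow 2).comp hg.continuous) _ _
    have hint := intervalIntegral.integral_mono_on (μ := volume) (f := fun _ => G x - D) hL.le
      intervalIntegrable_const (hG.intervalIntegrable _ _)
      fun y hy => by linarith [intervalIntegral_sq_sub_le hL.le hh hg hx hy]
    rwa [intervalIntegral.integral_const, smul_eq_mul, sub_zero, ← hA] at hint
  linarith [(le_div_iff₀' hL).2 havg]

theorem abs_wOp_le (hh : 0 ≤ h) {u : ℝ × ℝ → ℝ} (hu : Continuous (pdx u)) {x z : ℝ}
    (hz : z ∈ Icc (-h) 0) : |wOp u (x, z)| ≤ √h * √(∫ s in -h..0, pdx u (x, s) ^ 2) := by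
  have hslice : Continuous fun s => pdx u (x, s) :=
    hu.comp (continuous_const.prodMk continuous_id)
  calc |wOp u (x, z)| ≤ ∫ s in z..0, |pdx u (x, s)| :=
        intervalIntegral.abs_integral_le_integral_abs hz.2
    _ ≤ ∫ s in -h..0, |pdx u (x, s)| :=
        intervalIntegral.integral_mono_interval hz.1 hz.2 le_rfl
          (.of_forall fun _ => abs_nonneg _) (hslice.abs.intervalIntegrable _ _)
    _ ≤ √h * √(∫ s in -h..0, pdx u (x, s) ^ 2) := by
        simpa using intervalIntegral_abs_le_sqrt_mul_sqrt (neg_nonpos.2 hh) hslice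

theorem abs_wOp_le_sqrt_h1n_mul_h2n (hL : 0 < L) (hh : 0 ≤ h) {u : ℝ × ℝ → ℝ}
    (hu : ContDiff ℝ 2 u) {p : ℝ × ℝ} (hp : p ∈ cdom L h) :
    |wOp u p| ≤ √h * √(1 / L + 2) * √(h1n L h u * h2n L h u) := by
  obtain ⟨x, z⟩ := p
  obtain ⟨hx, hz⟩ := hp
  have hg : ContDiff ℝ 1 (pdx u) := contDiff_pdx hu (by norm_num)
  have ha := l2_pdx_le_h1n (L := L) (h := h) u
  have hb := l2_pdx_pdx_le_h2n (L := L) (h := h) u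
  have h12 := h1n_le_h2n (L := L) (h := h) u
  have ha0 := l2_nonneg (L := L) (h := h) (pdx u)
  have hb0 := l2_nonneg (L := L) (h := h) (pdx (pdx u))
  have hcol : ∫ s in -h..0, pdx u (x, s) ^ 2 ≤ (1 / L + 2) * (h1n L h u * h2n L h u) := by
    refine (intervalIntegral_sq_le hL hh hg hx).trans ?_
    have hsq : l2 L h (pdx u) ^ 2 ≤ h1n L h u * h2n L h u := by
      rw [sq]; exact mul_le_mul ha (ha.trans h12) ha0 (ha0.trans ha)
    have hprod : l2 L h (pdx u) * l2 L h (pdx (pdx u)) ≤ h1n L h u * h2n L h u :=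
      mul_le_mul ha hb hb0 (ha0.trans ha)
    rw [add_mul, one_div_mul_eq_div, mul_assoc 2]
    gcongr
  calc |wOp u (x, z)| ≤ √h * √(∫ s in -h..0, pdx u (x, s) ^ 2) :=
        abs_wOp_le hh hg.continuous hz
    _ ≤ √h * √(1 / L + 2) * √(h1n L h u * h2n L h u) := by
        rw [mul_assoc √h, ← Real.sqrt_mul (by positivity : (0 : ℝ) ≤ 1 / L + 2)]
        gcongr

end Rectangle

theorem stmt16 (L h : ℝ) (hL : 0 < L) (hh : 0 < h) :
    ∃ c > 0, ∀ u φ ψ : ℝ × ℝ → ℝ,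
      ContDiff ℝ 2 u → ContDiff ℝ 1 φ → Continuous ψ →
      |∫ p in dom L h, wOp u p * pdz φ p * ψ p| ≤
        c * h1n L h u ^ ((1:ℝ)/2) * h2n L h u ^ ((1:ℝ)/2) * l2 L h (pdz φ) * l2 L h ψ := by
  refine ⟨√h * √(1 / L + 2), by positivity, fun u φ ψ hu hφ hψ => ?_⟩
  have hw : ∀ᵐ p ∂(volume.restrict (dom L h)),
      |wOp u p| ≤ √h * √(1 / L + 2) * √(h1n L h u * h2n L h u) :=
    ae_restrict_of_forall_mem (measurableSet_Ioo.prod measurableSet_Ioo) fun p hp =>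
      abs_wOp_le_sqrt_h1n_mul_h2n hL hh.le hu (dom_subset_cdom hp)
  rw [← Real.sqrt_eq_rpow, ← Real.sqrt_eq_rpow, mul_assoc (√h * √(1 / L + 2)),
    ← Real.sqrt_mul (x := h1n L h u) (Real.sqrt_nonneg _)]
  exact abs_integral_mul_mul_le (by positivity) hw (memLp_two_dom (continuous_pdz hφ))
    (memLp_two_dom hψ)
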